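/- Let f be a proper lower semicontinuous convex function on a real Hilbert space H, γ > 0, and (x,η) ∈ H × ℝ. If η + γ f*(x/γ) ≤ 0 then prox_{γ𝑓̃}(x,η) = (0,0). -/

import Mathlib

open scoped RealInnerProductSpace
open Filter Topology

/-- Fenchel conjugate of `f` on a real inner product space. -/
noncomputable def fenchel {H : Type*} [NormedAddCommGroup H] [InnerProductSpace ℝ H]
    (f : H → EReal) (u : H) : EReal :=
  ⨆ x : H, ((⟪x, u⟫ : ℝ) : EReal) - f x

/-- Epigraph of an `EReal`-valued function. -/
def epi {E : Type*} (f : E → EReal) : Set (E × ℝ) := {p | f p.1 ≤ (p.2 : EReal)}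

/-- `f` is proper, lower semicontinuous and convex. -/
def ProperLscConvex {E : Type*} [AddCommGroup E] [Module ℝ E] [TopologicalSpace E]
    (f : E → EReal) : Prop :=
  (∀ x, f x ≠ ⊥) ∧ (∃ x, f x ≠ ⊤) ∧ LowerSemicontinuous f ∧ Convex ℝ (epi f)

/-- Effective domain. -/
def edom {E : Type*} (f : E → EReal) : Set E := {x | f x ≠ ⊤}

/-- Recession function of a proper lsc convex function:
`rec f x = sup_{y ∈ dom f} (f (y + x) - f y)`. -/
noncomputable def recFn {E : Type*} [AddCommGroup E] (f : E → EReal) (x : E) : EReal :=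
  ⨆ (y : E) (_ : f y ≠ ⊤), f (y + x) - f y

/-- Perspective of `f`. -/
noncomputable def persp {E : Type*} [AddCommGroup E] [Module ℝ E] (f : E → EReal) :
    E × ℝ → EReal := fun p =>
  if 0 < p.2 then (p.2 : EReal) * f (p.2⁻¹ • p.1)
  else if p.2 = 0 then recFn f p.1
  else ⊤

/-- `p` is the proximal point `prox_{γ f} x`, i.e. the minimizer of
`γ f(y) + ½‖x - y‖²`. -/
def IsProx {H : Type*} [NormedAddCommGroup H] (f : H → EReal) (γ : ℝ) (x p : H) : Prop :=
  ∀ y : H, (γ : EReal) * f p + ((‖x - p‖ ^ 2 / 2 : ℝ) : EReal)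
    ≤ (γ : EReal) * f y + ((‖x - y‖ ^ 2 / 2 : ℝ) : EReal)

/-- `p` is the metric projection of `x` onto `C`. -/
def IsProj {H : Type*} [NormedAddCommGroup H] (C : Set H) (x p : H) : Prop :=
  p ∈ C ∧ ∀ y ∈ C, ‖x - p‖ ≤ ‖x - y‖

/-- Proximity operator on `H ⊕ ℝ` (with the Hilbert direct-sum norm
`‖(x,η)‖² = ‖x‖² + η²`). -/
def IsProx2 {H : Type*} [NormedAddCommGroup H] (F : H × ℝ → EReal) (γ : ℝ)
    (x : H) (η : ℝ) (p : H) (μ : ℝ) : Prop :=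
  ∀ (y : H) (ν : ℝ),
    (γ : EReal) * F (p, μ) + (((‖x - p‖ ^ 2 + (η - μ) ^ 2) / 2 : ℝ) : EReal)
      ≤ (γ : EReal) * F (y, ν) + (((‖x - y‖ ^ 2 + (η - ν) ^ 2) / 2 : ℝ) : EReal)

/-- Fenchel conjugate on `H ⊕ ℝ` with `⟪(x,η),(u,χ)⟫ = ⟪x,u⟫ + ηχ`. -/
noncomputable def fenchel2 {H : Type*} [NormedAddCommGroup H] [InnerProductSpace ℝ H]
    (F : H × ℝ → EReal) (u : H) (χ : ℝ) : EReal :=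
  ⨆ p : H × ℝ, ((⟪p.1, u⟫ + p.2 * χ : ℝ) : EReal) - F p

/-- Support function of a set. -/
noncomputable def suppFn {H : Type*} [NormedAddCommGroup H] [InnerProductSpace ℝ H]
    (C : Set H) (u : H) : EReal :=
  ⨆ x ∈ C, ((⟪x, u⟫ : ℝ) : EReal)

/-!
Put `u = γ⁻¹ • x` and `c = f*(u)`, a real number because `f` is proper and `η + γ c ≤ 0`.
Fenchel–Young says `f ≥ ⟪·, u⟫ - c`, so `ν f(y/ν) ≥ ⟪y, u⟫ - ν c` for `ν > 0`; since `c` is a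
supremum, every slope `f(z + y) - f z` can be made almost `⟪y, u⟫`, which gives the same bound for
`rec f` at `ν = 0`. Together with `η ≤ -γ c` this says `γ f̃(y, ν) ≥ ⟪x, y⟫ + η ν` everywhere, i.e.
`(x, η) ∈ γ ∂f̃(0, 0)` with `f̃(0, 0) = 0`, and expanding the squares proves the prox inequality at
`(0, 0)` with room `(‖y‖² + ν²) / 2` to spare.
-/

section Recession

variable {E : Type*} [AddCommGroup E] {g : E → EReal}

theorem recFn_zero (hbot : ∀ x, g x ≠ ⊥) (hdom : ∃ x, g x ≠ ⊤) : recFn g 0 = 0 := by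
  obtain ⟨z, hz⟩ := hdom
  refine le_antisymm (iSup₂_le fun y _ => by simpa using EReal.sub_self_le_zero) ?_
  calc (0 : EReal) = g (z + 0) - g z := by rw [add_zero, EReal.sub_self hz (hbot z)]
    _ ≤ recFn g 0 := le_iSup₂ (f := fun y (_ : g y ≠ ⊤) => g (y + 0) - g y) z hz

variable [Module ℝ E]

theorem persp_zero (hbot : ∀ x, g x ≠ ⊥) (hdom : ∃ x, g x ≠ ⊤) : persp g (0, 0) = 0 := by
  simp [persp, recFn_zero hbot hdom]

theorem persp_of_neg (y : E) {ν : ℝ} (hν : ν < 0) : persp g (y, ν) = ⊤ := by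
  simp [persp, hν.not_gt, hν.ne]

end Recession

section Perspective

variable {H : Type*} [NormedAddCommGroup H] [InnerProductSpace ℝ H] {f : H → EReal}

theorem inner_sub_le_fenchel (u z : H) :
    ((⟪z, u⟫ : ℝ) : EReal) - f z ≤ fenchel f u :=
  le_iSup (fun w => ((⟪w, u⟫ : ℝ) : EReal) - f w) z

theorem fenchel_ne_bot (hbot : ∀ x, f x ≠ ⊥) (hdom : ∃ x, f x ≠ ⊤) (u : H) :
    fenchel f u ≠ ⊥ := by
  obtain ⟨z, hz⟩ := hdom
  refine ne_bot_of_le_ne_bot ?_ (inner_sub_le_fenchel u z)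
  rw [← EReal.coe_toReal hz (hbot z), ← EReal.coe_sub]
  exact EReal.coe_ne_bot _

theorem inner_sub_le_of_fenchel_eq {u : H} {c : ℝ} (hc : fenchel f u = c) (z : H) :
    ((⟪z, u⟫ - c : ℝ) : EReal) ≤ f z := by
  have h := inner_sub_le_fenchel (f := f) u z
  rw [hc] at h
  induction hz : f z using EReal.rec with
  | bot => rw [hz, EReal.coe_sub_bot] at h; exact absurd h (by simp)
  | top => exact le_top
  | coe r =>
    rw [hz, ← EReal.coe_sub, EReal.coe_le_coe_iff] at h
    exact EReal.coe_le_coe_iff.2 (by linarith)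

theorem inner_le_recFn {u : H} {c : ℝ} (hc : fenchel f u = c) (y : H) :
    ((⟪y, u⟫ : ℝ) : EReal) ≤ recFn f y := by
  refine EReal.le_of_forall_lt_iff_le.1 fun t ht => ?_
  by_contra! hty
  replace hty : t < ⟪y, u⟫ := by exact_mod_cast hty
  obtain ⟨z, hz⟩ : ∃ z, ((c - (⟪y, u⟫ - t) : ℝ) : EReal) < ⟪z, u⟫ - f z := by
    rw [← lt_iSup_iff, ← fenchel, hc]
    exact_mod_cast (by linarith)
  obtain ⟨s, hs⟩ : ∃ s : ℝ, f z = s := by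
    induction hfz : f z using EReal.rec with
    | bot =>
      exact (EReal.coe_ne_bot _ (le_bot_iff.1 (hfz ▸ inner_sub_le_of_fenchel_eq hc z))).elim
    | top => rw [hfz, EReal.sub_top] at hz; exact absurd hz not_lt_bot
    | coe s => exact ⟨s, rfl⟩
  have hrec : ((⟪z + y, u⟫ - c - s : ℝ) : EReal) ≤ recFn f y :=
    calc ((⟪z + y, u⟫ - c - s : ℝ) : EReal) = ((⟪z + y, u⟫ - c : ℝ) : EReal) - f z := by
          rw [hs]; rfl
      _ ≤ f (z + y) - f z := EReal.sub_le_sub (inner_sub_le_of_fenchel_eq hc _) le_rfl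
      _ ≤ recFn f y :=
          le_iSup₂ (f := fun w (_ : f w ≠ ⊤) => f (w + y) - f w) z (by simp [hs])
  rw [hs, ← EReal.coe_sub, EReal.coe_lt_coe_iff] at hz
  have := EReal.coe_le_coe_iff.1 (hrec.trans ht.le)
  rw [inner_add_left] at this
  linarith

theorem inner_sub_mul_le_persp {u : H} {c : ℝ} (hc : fenchel f u = c) (y : H) {ν : ℝ}
    (hν : 0 ≤ ν) : ((⟪y, u⟫ - ν * c : ℝ) : EReal) ≤ persp f (y, ν) := by
  rcases hν.eq_or_lt with rfl | hν
  · simpa [persp] using inner_le_recFn hc y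
  · have h := mul_le_mul_of_nonneg_left (inner_sub_le_of_fenchel_eq hc (ν⁻¹ • y))
      (EReal.coe_nonneg.2 hν.le)
    rw [← EReal.coe_mul, real_inner_smul_left, mul_sub, mul_inv_cancel_left₀ hν.ne'] at h
    simpa [persp, hν] using h

theorem inner_add_mul_le_mul_persp {γ : ℝ} (hγ : 0 < γ) {x : H} {η c : ℝ}
    (hc : fenchel f (γ⁻¹ • x) = c) (hηc : η + γ * c ≤ 0) (y : H) (ν : ℝ) :
    ((⟪x, y⟫ + η * ν : ℝ) : EReal) ≤ γ * persp f (y, ν) := by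
  rcases lt_or_ge ν 0 with hν | hν
  · rw [persp_of_neg y hν, EReal.coe_mul_top_of_pos hγ]
    exact le_top
  calc ((⟪x, y⟫ + η * ν : ℝ) : EReal) ≤ ((γ * (⟪y, γ⁻¹ • x⟫ - ν * c) : ℝ) : EReal) := by
        rw [real_inner_smul_right, real_inner_comm, mul_sub, mul_inv_cancel_left₀ hγ.ne']
        exact_mod_cast (by nlinarith)
    _ ≤ γ * persp f (y, ν) := by
        rw [EReal.coe_mul]
        exact mul_le_mul_of_nonneg_left (inner_sub_mul_le_persp hc y hν)
          (EReal.coe_nonneg.2 hγ.le)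

end Perspective

/-- if `η + γ f*(x/γ) ≤ 0` then `prox_{γ f̃}(x,η) = (0,0)`. -/
theorem prox_persp_eq_zero_of_nonpos {H : Type*} [NormedAddCommGroup H]
    [InnerProductSpace ℝ H] (f : H → EReal) (hf : ProperLscConvex f)
    (γ : ℝ) (hγ : 0 < γ) (x : H) (η : ℝ)
    (hle : (η : EReal) + (γ : EReal) * fenchel f (γ⁻¹ • x) ≤ 0) :
    IsProx2 (persp f) γ x η 0 0 := by
  obtain ⟨hbot, hdom, -, -⟩ := hf
  have hfin : fenchel f (γ⁻¹ • x) ≠ ⊤ := by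
    intro h
    rw [h, EReal.coe_mul_top_of_pos hγ, EReal.coe_add_top] at hle
    exact absurd hle (by simp)
  obtain ⟨c, hc⟩ : ∃ c : ℝ, fenchel f (γ⁻¹ • x) = c :=
    ⟨_, (EReal.coe_toReal hfin (fenchel_ne_bot hbot hdom _)).symm⟩
  have hηc : η + γ * c ≤ 0 := by
    rw [hc] at hle
    exact_mod_cast hle
  intro y ν
  rw [persp_zero hbot hdom, mul_zero, zero_add]
  calc (((‖x - 0‖ ^ 2 + (η - 0) ^ 2) / 2 : ℝ) : EReal)
      ≤ ((⟪x, y⟫ + η * ν : ℝ) : EReal) + (((‖x - y‖ ^ 2 + (η - ν) ^ 2) / 2 : ℝ) : EReal) := by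
        rw [← EReal.coe_add, EReal.coe_le_coe_iff, sub_zero, sub_zero, norm_sub_sq_real]
        nlinarith [sq_nonneg ‖y‖, sq_nonneg ν]
    _ ≤ _ := add_le_add_left (inner_add_mul_le_mul_persp hγ hc hηc y ν) _
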